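/- arXiv:2307.03819 — 3 statements merged into one kernel-verified Lean document; each statement's English description precedes it below -/
import Mathlib

section
/- Let p ≥ 2 and n ≥ 1 be integers and m_1 ≤ m_2 ≤ ⋯ ≤ m_n positive integers. Then (p−1)·p^{n−1} · ∑_{k=1}^{n} (−1)^{k−1} ∑_{i=1}^{n−k+1} C(n−i, k−1) · (p−1)^{k−1} · p^{1−k} · (m_i+1) = ∑_{l=0}^{n−1} (p−1)·p^l·(m_{l+1}+1), where C(a,b) denotes the binomial coefficient (the equality holds in the rationals). -/
/-!
Swapping the two sums, the coefficient of `m i + 1` becomes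
`∑_j (-1)^j C(n-i, j) ((p-1)/p)^j = (1 - (p-1)/p)^(n-i) = p^(-(n-i))` by the binomial theorem,
and `(p-1) p^(n-1) p^(-(n-i)) = (p-1) p^(i-1)` is the `i`-th term of the right-hand side.
-/

open Finset

lemma sum_Icc_one_eq_sum_range {M : Type*} [AddCommMonoid M] (f : ℕ → M) (N : ℕ) :
    ∑ k ∈ Icc 1 N, f k = ∑ j ∈ range N, f (j + 1) := by
  rw [← Ico_add_one_right_eq_Icc, sum_Ico_eq_sum_range, Nat.add_sub_cancel]
  simp only [add_comm]

lemma sum_Icc_sum_Icc_sub_add_one_comm {M : Type*} [AddCommMonoid M] (n : ℕ)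
    (f : ℕ → ℕ → M) :
    ∑ k ∈ Icc 1 n, ∑ i ∈ Icc 1 (n - k + 1), f k i
      = ∑ i ∈ Icc 1 n, ∑ k ∈ Icc 1 (n - i + 1), f k i :=
  sum_comm' fun k i => by simp only [mem_Icc]; omega

lemma sum_range_neg_one_pow_mul_choose_mul_sub_one_pow_mul_inv_pow {K : Type*} [Field K]
    {x : K} (hx : x ≠ 0) (N : ℕ) :
    ∑ j ∈ range (N + 1), (-1) ^ j * (N.choose j * (x - 1) ^ j * (x ^ j)⁻¹) = (x ^ N)⁻¹ := by
  have hbase : x⁻¹ = -((x - 1) * x⁻¹) + 1 := by field_simp; ring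
  rw [← inv_pow, hbase, add_pow]
  refine sum_congr rfl fun j _ => ?_
  rw [neg_pow ((x - 1) * x⁻¹), mul_pow, inv_pow, one_pow]
  ring

theorem generic_different_inclusion_exclusion_general
    (p : ℕ) (hp : 2 ≤ p) (n : ℕ)
    (m : ℕ → ℕ) :
    ((p : ℚ) - 1) * (p : ℚ) ^ (n - 1) *
        ∑ k ∈ Finset.Icc 1 n, (-1 : ℚ) ^ (k - 1) *
          ∑ i ∈ Finset.Icc 1 (n - k + 1),
            ((n - i).choose (k - 1) : ℚ) * ((p : ℚ) - 1) ^ (k - 1)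
              * ((p : ℚ) ^ (k - 1))⁻¹ * ((m i : ℚ) + 1)
      = ∑ l ∈ Finset.range n, ((p : ℚ) - 1) * (p : ℚ) ^ l * ((m (l + 1) : ℚ) + 1) := by
  have hp0 : (p : ℚ) ≠ 0 := Nat.cast_ne_zero.2 (by omega)
  have hcoeff : ∀ i, ∑ k ∈ Icc 1 (n - i + 1), (-1 : ℚ) ^ (k - 1) *
      ((n - i).choose (k - 1) * ((p : ℚ) - 1) ^ (k - 1) * ((p : ℚ) ^ (k - 1))⁻¹)
        = ((p : ℚ) ^ (n - i))⁻¹ := fun i => by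
    rw [sum_Icc_one_eq_sum_range]
    simp only [Nat.add_sub_cancel]
    exact sum_range_neg_one_pow_mul_choose_mul_sub_one_pow_mul_inv_pow hp0 _
  calc _ = ((p : ℚ) - 1) * (p : ℚ) ^ (n - 1) *
          ∑ i ∈ Icc 1 n, ((p : ℚ) ^ (n - i))⁻¹ * ((m i : ℚ) + 1) := by
        congr 1
        simp only [mul_sum]
        rw [sum_Icc_sum_Icc_sub_add_one_comm]
        refine sum_congr rfl fun i _ => ?_
        rw [← hcoeff i, sum_mul]
        exact sum_congr rfl fun k _ => by ring
    _ = ∑ i ∈ Icc 1 n, ((p : ℚ) - 1) * (p : ℚ) ^ (i - 1) * ((m i : ℚ) + 1) := by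
        rw [mul_sum]
        refine sum_congr rfl fun i hi => ?_
        obtain ⟨hi1, hin⟩ := mem_Icc.1 hi
        rw [show i - 1 = (n - 1) - (n - i) by omega, pow_sub₀ _ hp0 (show n - i ≤ n - 1 by omega)]
        ring
    _ = _ := by
        rw [sum_Icc_one_eq_sum_range]
        simp only [Nat.add_sub_cancel]

/-- The inclusion–exclusion computation of the generic different:
`(p-1) * p^(n-1) * ∑_{k=1}^n (-1)^(k-1) ∑_{i=1}^{n-k+1} C(n-i, k-1) * (p-1)^(k-1) * p^(1-k) * (m i + 1)`
equals `∑_{l=0}^{n-1} (p-1) * p^l * (m (l+1) + 1)` in `ℚ`. -/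
theorem generic_different_inclusion_exclusion
    (p : ℕ) (hp : 2 ≤ p) (n : ℕ) (hn : 1 ≤ n)
    (m : ℕ → ℕ) (hmpos : ∀ i, 1 ≤ i → i ≤ n → 0 < m i)
    (hm : ∀ i, 1 ≤ i → i < n → m i ≤ m (i + 1)) :
    ((p : ℚ) - 1) * (p : ℚ) ^ (n - 1) *
        ∑ k ∈ Finset.Icc 1 n, (-1 : ℚ) ^ (k - 1) *
          ∑ i ∈ Finset.Icc 1 (n - k + 1),
            ((n - i).choose (k - 1) : ℚ) * ((p : ℚ) - 1) ^ (k - 1)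
              * ((p : ℚ) ^ (k - 1))⁻¹ * ((m i : ℚ) + 1)
      = ∑ l ∈ Finset.range n, ((p : ℚ) - 1) * (p : ℚ) ^ l * ((m (l + 1) : ℚ) + 1) :=
  generic_different_inclusion_exclusion_general p hp n m
end

section
/- Let R be a commutative ring in which 2 is not a zero divisor, and let ρ, A, U, V, B, q ∈ R with ρ^{2r−1} = 2 for some r ≥ 3 and q² = ρ^{4r−3}UV + ρ²U². Suppose (ρ^{4r−5}UV + U²)^{1/2} := q/ρ satisfies q/ρ = −ρ^{2r−2}B − ρ^{2r−4}A − U − ρ^{2r−4}V. Then, in R[T^{−1}], (1 + qT^{−1})² + 4BT^{−1} − 4AU²T^{−3} = 1 − (ρ^{4r−4}A + 2ρU + ρ^{4r−4}V)T^{−1} + (ρ^{4r−3}UV + ρ²U²)T^{−2} − 4AU²T^{−3}. -/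
open Polynomial

/-- The central polynomial identity in Lemma 5.7 (`222lifting`): in `R[T⁻¹]`
(the variable `X` playing the role of `T⁻¹`),
`(1 + q T⁻¹)² + 4B T⁻¹ - 4AU² T⁻³ = 1 - (ρ^(4r-4) A + 2ρU + ρ^(4r-4) V) T⁻¹ + (ρ^(4r-3) UV + ρ²U²) T⁻² - 4AU² T⁻³`. -/
theorem square_completion_identity
    (R : Type*) [CommRing R]
    (h2 : ∀ x : R, 2 * x = 0 → x = 0)
    (r : ℕ) (hr : 3 ≤ r)
    (ρ A U V B q : R)
    (hρ : ρ ^ (2 * r - 1) = 2)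
    (hq2 : q ^ 2 = ρ ^ (4 * r - 3) * U * V + ρ ^ 2 * U ^ 2)
    (hq : q = ρ * (-(ρ ^ (2 * r - 2)) * B - ρ ^ (2 * r - 4) * A - U
        - ρ ^ (2 * r - 4) * V)) :
    (1 + C q * X) ^ 2 + C (4 * B) * X - C (4 * A * U ^ 2) * X ^ 3
      = 1 - C (ρ ^ (4 * r - 4) * A + 2 * ρ * U + ρ ^ (4 * r - 4) * V) * X
          + C (ρ ^ (4 * r - 3) * U * V + ρ ^ 2 * U ^ 2) * X ^ 2
          - C (4 * A * U ^ 2) * X ^ 3 := by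
  obtain ⟨k, rfl⟩ : ∃ k, r = k + 3 := ⟨r - 3, by omega⟩
  have e1 : 2 * (k + 3) - 1 = 2 * k + 5 := by omega
  have e2 : 2 * (k + 3) - 2 = 2 * k + 4 := by omega
  have e3 : 2 * (k + 3) - 4 = 2 * k + 2 := by omega
  have e4 : 4 * (k + 3) - 4 = 4 * k + 8 := by omega
  have e5 : 4 * (k + 3) - 3 = 4 * k + 9 := by omega
  rw [e1] at hρ
  rw [e2, e3] at hq
  simp only [e4, e5] at hq2 ⊢
  have hA : ρ ^ (4 * k + 8) * A + 2 * ρ * U + ρ ^ (4 * k + 8) * V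
      = -(2 * q + 4 * B) := by
    linear_combination 2 * hq + (ρ ^ (2 * k + 3) * (A + V) - 2 * B) * hρ
  rw [hA, ← hq2]
  simp only [map_neg, map_add, map_mul, map_pow, map_ofNat]
  ring
end

section
/- Suppose T is a Hurwitz tree for a lift of a (Z/2)^3-cover of type (4,4,4), with the property that every subtree corresponding to a Klein-four subcover of type (4,4) has branch partition (1,1,1,1,1,1), (3,3), or (2,2,2), that every Z/2-subcover lift with non-equidistant geometry has all branches of even size, and that the branch cycle criterion holds (the 7 branch points are in bijection with the 7 nontrivial elements of (Z/2)^3 as inertia generators, and two generating subcovers of conductor 4 share exactly 2 branch points while all three share exactly 1). Then T has branch partition (1,1,1,1,1,1,1), i.e., the 7 branch points are equidistant. -/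
/-!
Suppose two distinct branch points `a`, `b` lie on one branch and put `c = a + b`. For
`x ∉ {0, a, b, c}` the points `a, b, x, x + c` form the branch locus of a `ℤ/2`-subcover, so
the even-branch condition puts `x` and `x + c` on a common branch. In the Klein-four subtree
of `⟨c⟩` these pairs are then whole branches, since no branch there has four points. In the
Klein-four subtree of `⟨a⟩` the branch of some `u` contains `u + c`, so all its branches have
the same size `≥ 2`, and the only possible partner of `b` is `c`. Rerunning the first step with
`b, c` in place of `a, b` puts `u` and `u + a` on one branch, which is not one of the pairs
`{x, x + c}`.
-/

open scoped Classical

namespace Stmt17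

/-- The group `(ℤ/2)³`; its 7 nontrivial elements are the branch points of a lift of a
`(ℤ/2)³`-cover of type `(4,4,4)`, identified with the generators of their inertia
groups via the branch cycle criterion (so that the branch locus of the `ℤ/2`-subcover
corresponding to an index-2 subgroup `G'` is the set of nontrivial elements outside
`G'`, the branch locus of the Klein-four subcover corresponding to an order-2
subgroup `H` is the set of nontrivial elements outside `H`, two generating subcovers
share exactly 2 branch points, and all three share exactly 1). -/
abbrev G : Type := ZMod 2 × ZMod 2 × ZMod 2

/-- `br : G → ℕ` assigns to each branch point the branch of the Hurwitz tree it lies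
on; `classSizes br S` is the multiset of branch sizes of the points of `S`. -/
noncomputable def classSizes (br : G → ℕ) (S : Finset G) : Multiset ℕ :=
  (S.image br).val.map fun j => (S.filter fun g => br g = j).card

open Submodule

theorem ZMod.two_eq_zero_or_one (a : ZMod 2) : a = 0 ∨ a = 1 := by
  revert a
  decide

section ZModTwo

variable {V : Type*} [AddCommGroup V] [Module (ZMod 2) V]

theorem mem_span_singleton_zmod_two {v g : V} : g ∈ (ZMod 2) ∙ v ↔ g = 0 ∨ g = v := by
  rw [mem_span_singleton]
  constructor
  · rintro ⟨a, rfl⟩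
    rcases ZMod.two_eq_zero_or_one a with rfl | rfl <;> simp
  · rintro (rfl | rfl)
    exacts [⟨0, zero_smul _ _⟩, ⟨1, one_smul _ _⟩]

theorem mem_span_pair_zmod_two {v w g : V} :
    g ∈ span (ZMod 2) {v, w} ↔ g = 0 ∨ g = v ∨ g = w ∨ g = v + w := by
  rw [mem_span_pair]
  constructor
  · rintro ⟨a, b, rfl⟩
    rcases ZMod.two_eq_zero_or_one a with rfl | rfl <;>
      rcases ZMod.two_eq_zero_or_one b with rfl | rfl <;> simp
  · rintro (rfl | rfl | rfl | rfl)
    exacts [⟨0, 0, by simp⟩, ⟨1, 0, by simp⟩, ⟨0, 1, by simp⟩, ⟨1, 1, by simp⟩]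

end ZModTwo

theorem card_filter_notMem_add_card {A : Type*} [AddGroup A] [Fintype A] (H : AddSubgroup A) :
    (Finset.univ.filter fun g => g ∉ H).card + Nat.card H = Fintype.card A := by
  rw [Nat.card_eq_fintype_card, Fintype.card_subtype, add_comm,
    Finset.card_filter_add_card_filter_not, Finset.card_univ]

/-- The library instance has characteristic `Nat.lcm 2 2`; stating it as `2` lets `grind` use it. -/
instance : CharP G 2 := Prod.charP _ _ 2

theorem exists_ne_zero_ne_ne_ne_add (a b : G) :
    ∃ u : G, u ≠ 0 ∧ u ≠ a ∧ u ≠ b ∧ u ≠ a + b := by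
  revert a b
  decide

theorem card_span_singleton {v : G} (hv : v ≠ 0) :
    Nat.card ((ZMod 2) ∙ v).toAddSubgroup = 2 := by
  rw [Nat.card_congr (α := ((ZMod 2) ∙ v).toAddSubgroup) (β := {g : G // g = 0 ∨ g = v})
      (Equiv.subtypeEquivRight fun _ => mem_span_singleton_zmod_two),
    Nat.card_eq_fintype_card, Fintype.card_subtype]
  revert v
  decide

theorem card_span_pair {v w : G} (hv : v ≠ 0) (hw : w ≠ 0) (hvw : v ≠ w) :
    Nat.card (span (ZMod 2) {v, w}).toAddSubgroup = 4 := by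
  rw [Nat.card_congr (α := (span (ZMod 2) {v, w}).toAddSubgroup)
      (β := {g : G // g = 0 ∨ g = v ∨ g = w ∨ g = v + w})
      (Equiv.subtypeEquivRight fun _ => mem_span_pair_zmod_two),
    Nat.card_eq_fintype_card, Fintype.card_subtype]
  revert v w
  decide

noncomputable def branchLocus (H : AddSubgroup G) : Finset G :=
  Finset.univ.filter fun g => g ∉ H

theorem mem_branchLocus_span_singleton {c g : G} :
    g ∈ branchLocus ((ZMod 2) ∙ c).toAddSubgroup ↔ g ≠ 0 ∧ g ≠ c := by
  simp [branchLocus, mem_span_singleton_zmod_two]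

theorem branchLocus_span_pair {p q x : G} (hp : p ≠ 0) (hq : q ≠ 0) (hpq : p ≠ q)
    (hx : x ≠ 0) (hxp : x ≠ p) (hxq : x ≠ q) (hxpq : x ≠ p + q) :
    branchLocus (span (ZMod 2) {p + q, p + x}).toAddSubgroup = {p, q, x, x + (p + q)} := by
  symm
  apply Finset.eq_of_subset_of_card_le
  · intro g hg
    simp only [Finset.mem_insert, Finset.mem_singleton] at hg
    simp only [branchLocus, Finset.mem_filter, Finset.mem_univ, true_and,
      mem_toAddSubgroup, mem_span_pair_zmod_two]
    rcases hg with rfl | rfl | rfl | rfl <;> grind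
  · have hcard : (branchLocus (span (ZMod 2) {p + q, p + x}).toAddSubgroup).card + 4 = 8 := by
      rw [← card_span_pair (v := p + q) (w := p + x) (by grind) (by grind) (by grind)]
      exact card_filter_notMem_add_card _
    rw [Finset.card_insert_of_notMem (by grind), Finset.card_insert_of_notMem (by grind),
      Finset.card_pair (by grind)]
    omega

def IsKleinPartition (m : Multiset ℕ) : Prop :=
  m = {1, 1, 1, 1, 1, 1} ∨ m = {3, 3} ∨ m = {2, 2, 2}

def IsTrivialOrEvenPartition (m : Multiset ℕ) : Prop :=
  (∀ s ∈ m, s = 1) ∨ ∀ s ∈ m, Even s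

noncomputable def branch (br : G → ℕ) (S : Finset G) (x : G) : Finset G :=
  S.filter fun g => br g = br x

variable {br : G → ℕ}

theorem card_branch_mem_classSizes {S : Finset G} {x : G} (hx : x ∈ S) :
    (branch br S x).card ∈ classSizes br S :=
  Multiset.mem_map.2 ⟨br x, Finset.mem_image_of_mem br hx, rfl⟩

theorem IsKleinPartition.exists_forall_card_branch_eq {S : Finset G}
    (hS : IsKleinPartition (classSizes br S)) :
    ∃ n ≤ 3, ∀ x ∈ S, (branch br S x).card = n := by
  obtain ⟨n, hn, k, hk⟩ : ∃ n ≤ 3, ∃ k, classSizes br S = Multiset.replicate k n := by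
    rcases hS with h | h | h
    exacts [⟨1, by norm_num, 6, h⟩, ⟨3, le_rfl, 2, h⟩, ⟨2, by norm_num, 3, h⟩]
  exact ⟨n, hn, fun x hx => Multiset.eq_of_mem_replicate (hk ▸ card_branch_mem_classSizes hx)⟩

theorem IsTrivialOrEvenPartition.br_eq {p q x y : G}
    (hZ : IsTrivialOrEvenPartition (classSizes br {p, q, x, y}))
    (hpq : p ≠ q) (hxp : x ≠ p) (hxq : x ≠ q) (hbr : br p = br q) : br x = br y := by
  by_contra hxy
  rcases hZ with h | h
  · have hp := h _ (card_branch_mem_classSizes (br := br) (x := p) (by simp))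
    have h2 : ({p, q} : Finset G).card ≤ (branch br {p, q, x, y} p).card :=
      Finset.card_le_card fun g => by
        simp only [branch, Finset.mem_filter, Finset.mem_insert, Finset.mem_singleton]; grind
    rw [Finset.card_pair hpq] at h2
    omega
  · have hx := h _ (card_branch_mem_classSizes (br := br) (x := x) (by simp))
    by_cases hpx : br p = br x
    · have : branch br {p, q, x, y} x = {p, q, x} := by
        ext g
        simp only [branch, Finset.mem_filter, Finset.mem_insert, Finset.mem_singleton]
        grind
      rw [this, Finset.card_insert_of_notMem (by grind), Finset.card_pair (by grind)] at hx
      exact Nat.not_even_iff_odd.2 (by decide) hx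
    · have : branch br {p, q, x, y} x = {x} := by
        ext g
        simp only [branch, Finset.mem_filter, Finset.mem_insert, Finset.mem_singleton]
        grind
      rw [this, Finset.card_singleton] at hx
      exact Nat.not_even_one hx

theorem br_add_eq_of_br_eq
    (hZ2 : ∀ H : AddSubgroup G, Nat.card H = 4 →
      IsTrivialOrEvenPartition (classSizes br (branchLocus H)))
    {p q : G} (hp : p ≠ 0) (hq : q ≠ 0) (hpq : p ≠ q) (hbr : br p = br q)
    (x : G) (hx : x ≠ 0) (hxpq : x ≠ p + q) : br (x + (p + q)) = br x := by
  by_cases hxp : x = p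
  · rw [hxp, show p + (p + q) = q by grind, hbr]
  by_cases hxq : x = q
  · rw [hxq, show q + (p + q) = p by grind, hbr]
  have hZ := hZ2 _ (card_span_pair (v := p + q) (w := p + x) (by grind) (by grind) (by grind))
  rw [branchLocus_span_pair hp hq hpq hx hxp hxq hxpq] at hZ
  exact (hZ.br_eq hpq hxp hxq hbr).symm

theorem IsKleinPartition.eq_or_eq_add_of_br_eq {c : G}
    (hK : IsKleinPartition (classSizes br (branchLocus ((ZMod 2) ∙ c).toAddSubgroup)))
    (hc : c ≠ 0)
    (hpair : ∀ x, x ≠ 0 → x ≠ c → br (x + c) = br x)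
    (x y : G) (hx : x ≠ 0) (hxc : x ≠ c) (hy : y ≠ 0) (hyc : y ≠ c) (hxy : br x = br y) :
    y = x ∨ y = x + c := by
  by_contra hne
  obtain ⟨n, hn, hcard⟩ := hK.exists_forall_card_branch_eq
  have hsub :
      {x, x + c, y, y + c} ⊆ branch br (branchLocus ((ZMod 2) ∙ c).toAddSubgroup) x := by
    intro g hg
    simp only [Finset.mem_insert, Finset.mem_singleton] at hg
    simp only [branch, Finset.mem_filter, mem_branchLocus_span_singleton]
    rcases hg with rfl | rfl | rfl | rfl <;> grind
  have h4 := Finset.card_le_card hsub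
  rw [hcard x (mem_branchLocus_span_singleton.2 ⟨hx, hxc⟩),
    Finset.card_insert_of_notMem (by grind), Finset.card_insert_of_notMem (by grind),
    Finset.card_pair (by grind)] at h4
  omega

theorem IsKleinPartition.exists_ne_br_eq {h : G}
    (hK : IsKleinPartition (classSizes br (branchLocus ((ZMod 2) ∙ h).toAddSubgroup)))
    {u v z : G} (hu : u ≠ 0) (huh : u ≠ h) (hv : v ≠ 0) (hvh : v ≠ h) (huv : u ≠ v)
    (hbr : br u = br v) (hz : z ≠ 0) (hzh : z ≠ h) :
    ∃ w, w ≠ 0 ∧ w ≠ h ∧ w ≠ z ∧ br w = br z := by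
  obtain ⟨n, -, hcard⟩ := hK.exists_forall_card_branch_eq
  have h2 : ({u, v} : Finset G).card ≤
      (branch br (branchLocus ((ZMod 2) ∙ h).toAddSubgroup) u).card :=
    Finset.card_le_card fun g => by
      simp only [branch, Finset.mem_filter, Finset.mem_insert, Finset.mem_singleton,
        mem_branchLocus_span_singleton]
      grind
  rw [Finset.card_pair huv, hcard u (mem_branchLocus_span_singleton.2 ⟨hu, huh⟩),
    ← hcard z (mem_branchLocus_span_singleton.2 ⟨hz, hzh⟩)] at h2
  obtain ⟨w, hw, hwz⟩ := Finset.exists_mem_ne h2 z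
  simp only [branch, Finset.mem_filter, mem_branchLocus_span_singleton] at hw
  exact ⟨w, hw.1.1, hw.1.2, hwz, hw.2⟩

/-- Proposition 5.5: a Hurwitz tree for a lift of a `(ℤ/2)³`-cover of type `(4,4,4)`,
such that every Klein-four subcover (of type `(4,4)`) has branch partition
`(1,1,1,1,1,1)`, `(3,3)` or `(2,2,2)` (Mitchell), and every `ℤ/2`-subcover lift is
either equidistant (all branches singletons) or has all branches of even size,
has branch partition `(1,1,1,1,1,1,1)`: the 7 branch points are equidistant. -/
theorem type_444_equidistant
    (br : G → ℕ)
    (hKlein : ∀ H : AddSubgroup G, Nat.card H = 2 →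
      classSizes br (Finset.univ.filter fun g => g ∉ H) = ({1, 1, 1, 1, 1, 1} : Multiset ℕ)
        ∨ classSizes br (Finset.univ.filter fun g => g ∉ H) = ({3, 3} : Multiset ℕ)
        ∨ classSizes br (Finset.univ.filter fun g => g ∉ H) = ({2, 2, 2} : Multiset ℕ))
    (hZ2 : ∀ H : AddSubgroup G, Nat.card H = 4 →
      (∀ s ∈ classSizes br (Finset.univ.filter fun g => g ∉ H), s = 1)
        ∨ (∀ s ∈ classSizes br (Finset.univ.filter fun g => g ∉ H), Even s)) :
    ∀ g g' : G, g ≠ 0 → g' ≠ 0 → br g = br g' → g = g' := by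
  intro a b ha hb hab
  by_contra hne
  have hc : a + b ≠ 0 := by grind
  obtain ⟨u, hu, hua, hub, huc⟩ := exists_ne_zero_ne_ne_ne_add a b
  have hpair := br_add_eq_of_br_eq hZ2 ha hb hne hab
  have hsplit :=
    IsKleinPartition.eq_or_eq_add_of_br_eq (hKlein _ (card_span_singleton hc)) hc hpair
  have hbc : br b = br (a + b) := by
    obtain ⟨w, hw, hwa, hwb, hwbr⟩ := IsKleinPartition.exists_ne_br_eq
      (hKlein _ (card_span_singleton ha)) hu hua (by grind) (by grind) (by grind)
      (hpair u hu huc).symm hb (Ne.symm hne)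
    by_cases hwc : w = a + b
    · rw [← hwc, hwbr]
    · rcases hsplit b w hb (by grind) hw hwc hwbr.symm with h | h <;> grind
  have hpair' := br_add_eq_of_br_eq hZ2 hb hc (by grind) hbc
  rcases hsplit u (u + (b + (a + b))) hu huc (by grind) (by grind)
    (hpair' u hu (by grind)).symm with h | h <;> grind

end Stmt17
end
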